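/- Let (𝔣, 𝔱, k) be a unit-speed space-form curve frame on an open interval I with data (𝔭, 𝔮, χ, κ), and suppose k″ + (χ/2)k³ + (μ + κ)k + λ = 0 on I for some λ, μ ∈ ℝ. Then (σ₁, σ₂) := (𝔣, 𝔱) is a Legendre curve frame with C(t) = span{𝔣(t), 𝔱(t)}, and with ξ(t) := −𝔣(t) ∧ 𝔣′(t) the following hold: the quadratic differential Q^ξ is identically 1 (in particular ξ is a polarisation of C); the map 𝔯 := −(kκ + λ)·𝔣 + ((χ/2)k² + μ)·𝔱 − k′·𝔣′ + k·𝔮 − (k²/2)·𝔭 is constant on I, with value 𝔯̄; and the three pairs (𝔭, 0), (𝔮, −𝔣) and (𝔯̄, 2𝔱 + k𝔣) are linear conserved quantities of d + tξ. Moreover, if k is non-constant then 𝔭, 𝔮, 𝔯̄ are linearly independent, so d + tξ admits a 3-dimensional space of linear conserved quantities. -/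

import Mathlib

noncomputable section

/-- `V = ℝ⁵`. -/
abbrev V : Type := Fin 5 → ℝ

/-- The symmetric bilinear form of signature (3,2) on `V`. -/
def bB (x y : V) : ℝ := x 0 * y 0 + x 1 * y 1 + x 2 * y 2 - x 3 * y 3 - x 4 * y 4

/-- The skew-symmetric endomorphism `a ∧ b` of `V`. -/
def wedge (a b : V) : V →L[ℝ] V :=
  LinearMap.toContinuousLinearMap
    { toFun := fun x => bB a x • b - bB b x • a
      map_add' := by
        intro x y
        have h1 : bB a (x + y) = bB a x + bB a y := by simp [bB]; ring
        have h2 : bB b (x + y) = bB b x + bB b y := by simp [bB]; ring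
        try dsimp only
        rw [h1, h2]; module
      map_smul' := by
        intro c x
        have h1 : bB a (c • x) = c * bB a x := by simp [bB]; ring
        have h2 : bB b (c • x) = c * bB b x := by simp [bB]; ring
        try dsimp only
        rw [h1, h2]
        try simp only [RingHom.id_apply]
        module }

/-- Membership in `C(t) = span{σ₁(t), σ₂(t)}`. -/
def memC (σ₁ σ₂ : ℝ → V) (t : ℝ) (x : V) : Prop :=
  ∃ a b : ℝ, x = a • σ₁ t + b • σ₂ t

/-- A Legendre curve frame on an open interval `I`. -/
structure LegendreCurveFrame (I : Set ℝ) (σ₁ σ₂ : ℝ → V) : Prop where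
  isOpen : IsOpen I
  ordConn : I.OrdConnected
  smooth₁ : ContDiffOn ℝ (⊤ : ℕ∞) σ₁ I
  smooth₂ : ContDiffOn ℝ (⊤ : ℕ∞) σ₂ I
  indep : ∀ t ∈ I, ∀ a b : ℝ, a • σ₁ t + b • σ₂ t = 0 → a = 0 ∧ b = 0
  iso₁₁ : ∀ t ∈ I, bB (σ₁ t) (σ₁ t) = 0
  iso₁₂ : ∀ t ∈ I, bB (σ₁ t) (σ₂ t) = 0
  iso₂₂ : ∀ t ∈ I, bB (σ₂ t) (σ₂ t) = 0
  d₁₁ : ∀ t ∈ I, bB (deriv σ₁ t) (σ₁ t) = 0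
  d₁₂ : ∀ t ∈ I, bB (deriv σ₁ t) (σ₂ t) = 0
  d₂₁ : ∀ t ∈ I, bB (deriv σ₂ t) (σ₁ t) = 0
  d₂₂ : ∀ t ∈ I, bB (deriv σ₂ t) (σ₂ t) = 0
  rank3 : ∀ t ∈ I,
    Module.finrank ℝ
      ↥(Submodule.span ℝ ({σ₁ t, σ₂ t, deriv σ₁ t, deriv σ₂ t} : Set V)) = 3

/-- The curve `C` is circular. -/
def Circular (I : Set ℝ) (σ₁ σ₂ : ℝ → V) : Prop :=
  ∃ v : V, v ≠ 0 ∧ ∀ t ∈ I, memC σ₁ σ₂ t v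

/-- `ξ(t)` is a sum of endomorphisms `a ∧ b` with `a ∈ C(t)` and `b ∈ C(t)^⊥`. -/
def PolarForm (I : Set ℝ) (σ₁ σ₂ : ℝ → V) (ξ : ℝ → V →L[ℝ] V) : Prop :=
  ∀ t ∈ I, ∃ b₁ b₂ : V,
    bB b₁ (σ₁ t) = 0 ∧ bB b₁ (σ₂ t) = 0 ∧ bB b₂ (σ₁ t) = 0 ∧ bB b₂ (σ₂ t) = 0 ∧
    ξ t = wedge (σ₁ t) b₁ + wedge (σ₂ t) b₂

/-- `Q` represents the quadratic differential of `ξ`. -/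
def IsQuadDiff (I : Set ℝ) (σ₁ σ₂ : ℝ → V) (ξ : ℝ → V →L[ℝ] V) (Q : ℝ → ℝ) : Prop :=
  ∀ t ∈ I, ∃ a b c d : ℝ,
    ξ t (deriv σ₁ t) = a • σ₁ t + b • σ₂ t ∧
    ξ t (deriv σ₂ t) = c • σ₁ t + d • σ₂ t ∧
    Q t = a + d

/-- `ξ` is a polarisation of the curve `C`. -/
def IsPolarisation (I : Set ℝ) (σ₁ σ₂ : ℝ → V) (ξ : ℝ → V →L[ℝ] V) : Prop :=
  ContDiffOn ℝ (⊤ : ℕ∞) ξ I ∧ PolarForm I σ₁ σ₂ ξ ∧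
  ∃ Q : ℝ → ℝ, IsQuadDiff I σ₁ σ₂ ξ Q ∧ ∃ t ∈ I, Q t ≠ 0

/-- `(p₀, p₁)` is a linear conserved quantity of `d + tξ`. -/
def IsLCQ (I : Set ℝ) (σ₁ σ₂ : ℝ → V) (ξ : ℝ → V →L[ℝ] V) (p₀ : V) (p₁ : ℝ → V) : Prop :=
  ContDiffOn ℝ (⊤ : ℕ∞) p₁ I ∧
  (∀ t ∈ I, memC σ₁ σ₂ t (p₁ t)) ∧
  ∀ t ∈ I, deriv p₁ t + ξ t p₀ = 0


/-- A unit-speed space-form curve frame with data `(p, q, χ, κ)`: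
`f` is the light-cone lift of a unit-speed curve of geodesic curvature `k` in the
2-dimensional space form of constant curvature `κ`, and `tf` its tangent congruence. -/
structure SpaceFormFrame (I : Set ℝ) (p q : V) (χ κ : ℝ)
    (f tf : ℝ → V) (k : ℝ → ℝ) : Prop where
  isOpen : IsOpen I
  ordConn : I.OrdConnected
  hχ : χ = 1 ∨ χ = -1
  hq0 : q ≠ 0
  hpp : bB p p = -χ
  hqq : bB q q = -κ
  hpq : bB p q = 0
  smoothf : ContDiffOn ℝ (⊤ : ℕ∞) f I
  smootht : ContDiffOn ℝ (⊤ : ℕ∞) tf I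
  smoothk : ContDiffOn ℝ (⊤ : ℕ∞) k I
  hff : ∀ s ∈ I, bB (f s) (f s) = 0
  htt : ∀ s ∈ I, bB (tf s) (tf s) = 0
  hft : ∀ s ∈ I, bB (f s) (tf s) = 0
  hfq : ∀ s ∈ I, bB (f s) q = -1
  hfp : ∀ s ∈ I, bB (f s) p = 0
  htp : ∀ s ∈ I, bB (tf s) p = -1
  htq : ∀ s ∈ I, bB (tf s) q = 0
  hunit : ∀ s ∈ I, bB (deriv f s) (deriv f s) = 1
  htang : ∀ s ∈ I, deriv tf s = -(k s) • deriv f s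

lemma wedge_apply (a b x : V) : wedge a b x = bB a x • b - bB b x • a := rfl

lemma bB_comm (x y : V) : bB x y = bB y x := by simp only [bB]; ring
lemma bB_add_left (x y z : V) : bB (x + y) z = bB x z + bB y z := by
  simp only [bB, Pi.add_apply]; ring
lemma bB_smul_left (c : ℝ) (x z : V) : bB (c • x) z = c * bB x z := by
  simp only [bB, Pi.smul_apply, smul_eq_mul]; ring
lemma bB_add_right (x y z : V) : bB z (x + y) = bB z x + bB z y := by
  simp only [bB, Pi.add_apply]; ring
lemma bB_smul_right (c : ℝ) (x z : V) : bB z (c • x) = c * bB z x := by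
  simp only [bB, Pi.smul_apply, smul_eq_mul]; ring
lemma bB_zero_left (z : V) : bB 0 z = 0 := by simp [bB]
lemma bB_zero_right (z : V) : bB z 0 = 0 := by simp [bB]
lemma bB_neg_left (x z : V) : bB (-x) z = -bB x z := by
  simp only [bB, Pi.neg_apply]; ring
lemma bB_neg_right (x z : V) : bB z (-x) = -bB z x := by
  simp only [bB, Pi.neg_apply]; ring
lemma bB_sub_left (x y z : V) : bB (x - y) z = bB x z - bB y z := by
  simp only [bB, Pi.sub_apply]; ring
lemma bB_sub_right (x y z : V) : bB z (x - y) = bB z x - bB z y := by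
  simp only [bB, Pi.sub_apply]; ring

lemma bB_nondeg (u : V) (h : ∀ x, bB u x = 0) : u = 0 := by
  funext i
  have h0 := h (Pi.single 0 1)
  have h1 := h (Pi.single 1 1)
  have h2 := h (Pi.single 2 1)
  have h3 := h (Pi.single 3 1)
  have h4 := h (Pi.single 4 1)
  simp [bB, Pi.single_apply] at h0 h1 h2 h3 h4
  fin_cases i <;> simp_all

lemma HasDerivAt.bB' {φ ψ : ℝ → V} {vφ vψ : V} {s : ℝ}
    (hφ : HasDerivAt φ vφ s) (hψ : HasDerivAt ψ vψ s) :
    HasDerivAt (fun t => bB (φ t) (ψ t)) (bB vφ (ψ s) + bB (φ s) vψ) s := by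
  have Hf : ∀ i, HasDerivAt (fun t => φ t i) (vφ i) s := fun i => hasDerivAt_pi.1 hφ i
  have Hg : ∀ i, HasDerivAt (fun t => ψ t i) (vψ i) s := fun i => hasDerivAt_pi.1 hψ i
  have H := (((((Hf 0).mul (Hg 0)).add ((Hf 1).mul (Hg 1))).add ((Hf 2).mul (Hg 2))).sub
      ((Hf 3).mul (Hg 3))).sub ((Hf 4).mul (Hg 4))
  have hval : bB vφ (ψ s) + bB (φ s) vψ =
      vφ 0 * ψ s 0 + φ s 0 * vψ 0 + (vφ 1 * ψ s 1 + φ s 1 * vψ 1) +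
        (vφ 2 * ψ s 2 + φ s 2 * vψ 2) - (vφ 3 * ψ s 3 + φ s 3 * vψ 3) -
        (vφ 4 * ψ s 4 + φ s 4 * vψ 4) := by simp only [bB]; ring
  rw [hval]
  exact H

lemma derivVal_zero_of_constOn {φ : ℝ → ℝ} {I : Set ℝ} (hI : IsOpen I) {t : ℝ} (ht : t ∈ I)
    {c : ℝ} (hc : ∀ s ∈ I, φ s = c) {D : ℝ} (hD : HasDerivAt φ D t) : D = 0 := by
  have h0 : HasDerivAt φ 0 t :=
    (hasDerivAt_const t c).congr_of_eventuallyEq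
      (Filter.eventuallyEq_of_mem (hI.mem_nhds ht) hc)
  exact hD.unique h0

lemma frame_eq_zero (p q : V) (χ κ : ℝ) (a b c u : V)
    (haa : bB a a = 0) (hab : bB a b = 0) (hac : bB a c = 0)
    (hap : bB a p = 0) (haq : bB a q = -1)
    (hbb : bB b b = 0) (hbc : bB b c = 0) (hbp : bB b p = -1) (hbq : bB b q = 0)
    (hcc : bB c c = 1) (hcp : bB c p = 0) (hcq : bB c q = 0)
    (hpp : bB p p = -χ) (hqq : bB q q = -κ) (hpq : bB p q = 0)
    (h1 : bB u a = 0) (h2 : bB u b = 0) (h3 : bB u c = 0)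
    (h4 : bB u p = 0) (h5 : bB u q = 0) : u = 0 := by
  have hba : bB b a = 0 := (bB_comm b a).trans hab
  have hca : bB c a = 0 := (bB_comm c a).trans hac
  have hpa : bB p a = 0 := (bB_comm p a).trans hap
  have hqa : bB q a = -1 := (bB_comm q a).trans haq
  have hcb : bB c b = 0 := (bB_comm c b).trans hbc
  have hpb : bB p b = -1 := (bB_comm p b).trans hbp
  have hqb : bB q b = 0 := (bB_comm q b).trans hbq
  have hpc : bB p c = 0 := (bB_comm p c).trans hcp
  have hqc : bB q c = 0 := (bB_comm q c).trans hcq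
  have hqp : bB q p = 0 := (bB_comm q p).trans hpq
  set v : Fin 5 → V := ![a, b, c, p, q] with hv
  have hli : LinearIndependent ℝ v := by
    rw [Fintype.linearIndependent_iff]
    intro g hg
    have hg' : g 0 • a + g 1 • b + g 2 • c + g 3 • p + g 4 • q = 0 := by
      simpa [hv, Fin.sum_univ_five] using hg
    have E : ∀ w : V, bB (g 0 • a + g 1 • b + g 2 • c + g 3 • p + g 4 • q) w =
        g 0 * bB a w + g 1 * bB b w + g 2 * bB c w + g 3 * bB p w + g 4 * bB q w := by
      intro w
      simp [bB_add_left, bB_smul_left]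
    have e1 : g 0 * bB a a + g 1 * bB b a + g 2 * bB c a + g 3 * bB p a + g 4 * bB q a = 0 := by
      rw [← E a, hg']; exact bB_zero_left a
    have e2 : g 0 * bB a b + g 1 * bB b b + g 2 * bB c b + g 3 * bB p b + g 4 * bB q b = 0 := by
      rw [← E b, hg']; exact bB_zero_left b
    have e3 : g 0 * bB a c + g 1 * bB b c + g 2 * bB c c + g 3 * bB p c + g 4 * bB q c = 0 := by
      rw [← E c, hg']; exact bB_zero_left c
    have e4 : g 0 * bB a p + g 1 * bB b p + g 2 * bB c p + g 3 * bB p p + g 4 * bB q p = 0 := by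
      rw [← E p, hg']; exact bB_zero_left p
    have e5 : g 0 * bB a q + g 1 * bB b q + g 2 * bB c q + g 3 * bB p q + g 4 * bB q q = 0 := by
      rw [← E q, hg']; exact bB_zero_left q
    rw [haa, hba, hca, hpa, hqa] at e1
    rw [hab, hbb, hcb, hpb, hqb] at e2
    rw [hac, hbc, hcc, hpc, hqc] at e3
    rw [hap, hbp, hcp, hpp, hqp] at e4
    rw [haq, hbq, hcq, hpq, hqq] at e5
    have g4 : g 4 = 0 := by linarith
    have g3 : g 3 = 0 := by linarith
    have g2 : g 2 = 0 := by linarith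
    have g1 : g 1 = 0 := by rw [g3] at e4; linarith
    have g0 : g 0 = 0 := by rw [g4] at e5; linarith
    intro i
    fin_cases i <;> assumption
  have hsp : Submodule.span ℝ (Set.range v) = ⊤ := by
    apply Submodule.eq_top_of_finrank_eq
    rw [finrank_span_eq_card hli]
    simp
  apply bB_nondeg
  intro x
  have hx : x ∈ Submodule.span ℝ (Set.range v) := hsp ▸ Submodule.mem_top
  rw [Submodule.mem_span_range_iff_exists_fun] at hx
  obtain ⟨cf, rfl⟩ := hx
  simp [Fin.sum_univ_five, hv, bB_add_right, bB_smul_right, h1, h2, h3, h4, h5]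

def wedgeL : V →ₗ[ℝ] V →ₗ[ℝ] (V →L[ℝ] V) :=
  LinearMap.mk₂ ℝ wedge
    (fun a a' b => by
      ext x i
      simp only [wedge_apply, ContinuousLinearMap.add_apply, bB_add_left, Pi.add_apply,
        Pi.sub_apply, Pi.smul_apply, smul_eq_mul]
      ring)
    (fun c a b => by
      ext x i
      simp only [wedge_apply, ContinuousLinearMap.smul_apply, bB_smul_left, Pi.add_apply,
        Pi.sub_apply, Pi.smul_apply, smul_eq_mul]
      ring)
    (fun a b b' => by
      ext x i
      simp only [wedge_apply, ContinuousLinearMap.add_apply, bB_add_left, Pi.add_apply,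
        Pi.sub_apply, Pi.smul_apply, smul_eq_mul]
      ring)
    (fun c a b => by
      ext x i
      simp only [wedge_apply, ContinuousLinearMap.smul_apply, bB_smul_left, Pi.add_apply,
        Pi.sub_apply, Pi.smul_apply, smul_eq_mul]
      ring)

def wedgeCL : V →L[ℝ] V →L[ℝ] (V →L[ℝ] V) :=
  LinearMap.toContinuousLinearMap
    { toFun := fun a => LinearMap.toContinuousLinearMap (wedgeL a)
      map_add' := fun a a' => by simp only [map_add]
      map_smul' := fun c a => by simp only [map_smul, RingHom.id_apply] }

lemma wedgeCL_apply (a b : V) : wedgeCL a b = wedge a b := rfl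


/-- a constrained elastic curve gives a Legendre curve frame `(𝔣, 𝔱)`; the
arclength polarisation `ξ = −𝔣 ∧ 𝔣′` has quadratic differential identically 1, the vector
field `𝔯` is constant with value `r̄`, and `(𝔭, 0)`, `(𝔮, −𝔣)`, `(r̄, 2𝔱 + k𝔣)` are linear
conserved quantities of `d + tξ`; if `k` is non-constant these give a 3-dimensional space of
linear conserved quantities. -/
theorem stmt11 (I : Set ℝ) (p q : V) (χ κ : ℝ) (f tf : ℝ → V) (k : ℝ → ℝ)
    (h : SpaceFormFrame I p q χ κ f tf k) (hne : I.Nonempty) (lam mu : ℝ)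
    (hODE : ∀ s ∈ I,
      deriv (deriv k) s + χ / 2 * (k s) ^ 3 + (mu + κ) * k s + lam = 0)
    (ξ : ℝ → V →L[ℝ] V) (hξ : ∀ s, ξ s = -(wedge (f s) (deriv f s)))
    (r : ℝ → V)
    (hr : ∀ s, r s = (-(k s * κ + lam)) • f s + (χ / 2 * (k s) ^ 2 + mu) • tf s
      - (deriv k s) • deriv f s + (k s) • q - ((k s) ^ 2 / 2) • p) :
    LegendreCurveFrame I f tf ∧
    IsQuadDiff I f tf ξ (fun _ => 1) ∧
    IsPolarisation I f tf ξ ∧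
    ∃ rbar : V, (∀ s ∈ I, r s = rbar) ∧
      IsLCQ I f tf ξ p (fun _ => 0) ∧
      IsLCQ I f tf ξ q (fun s => -(f s)) ∧
      IsLCQ I f tf ξ rbar (fun s => (2 : ℝ) • tf s + (k s) • f s) ∧
      ((∃ s ∈ I, ∃ s' ∈ I, k s ≠ k s') → LinearIndependent ℝ ![p, q, rbar]) := by
  
  obtain ⟨t₀, ht₀⟩ := hne
  have hone : ((⊤ : ℕ∞) : WithTop ℕ∞) ≠ 0 := by simp
  have hadd : ((⊤ : ℕ∞) : WithTop ℕ∞) + 1 ≤ ((⊤ : ℕ∞) : WithTop ℕ∞) := le_of_eq rfl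
  have hf'sm : ContDiffOn ℝ (⊤ : ℕ∞) (deriv f) I := h.smoothf.deriv_of_isOpen h.isOpen hadd
  have hk'sm : ContDiffOn ℝ (⊤ : ℕ∞) (deriv k) I := h.smoothk.deriv_of_isOpen h.isOpen hadd
  have hfD : ∀ t ∈ I, HasDerivAt f (deriv f t) t := fun t ht =>
    ((h.smoothf.differentiableOn hone).differentiableAt (h.isOpen.mem_nhds ht)).hasDerivAt
  have htD : ∀ t ∈ I, HasDerivAt tf (deriv tf t) t := fun t ht =>
    ((h.smootht.differentiableOn hone).differentiableAt (h.isOpen.mem_nhds ht)).hasDerivAt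
  have hkD : ∀ t ∈ I, HasDerivAt k (deriv k t) t := fun t ht =>
    ((h.smoothk.differentiableOn hone).differentiableAt (h.isOpen.mem_nhds ht)).hasDerivAt
  have hf'D : ∀ t ∈ I, HasDerivAt (deriv f) (deriv (deriv f) t) t := fun t ht =>
    ((hf'sm.differentiableOn hone).differentiableAt (h.isOpen.mem_nhds ht)).hasDerivAt
  have hk'D : ∀ t ∈ I, HasDerivAt (deriv k) (deriv (deriv k) t) t := fun t ht =>
    ((hk'sm.differentiableOn hone).differentiableAt (h.isOpen.mem_nhds ht)).hasDerivAt
  -- first-derivative pairings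
  have hWff : ∀ t ∈ I, bB (deriv f t) (f t) = 0 := by
    intro t ht
    have h0 := derivVal_zero_of_constOn h.isOpen ht h.hff ((hfD t ht).bB' (hfD t ht))
    have hc := bB_comm (f t) (deriv f t)
    linarith
  have hWffr : ∀ t ∈ I, bB (f t) (deriv f t) = 0 := fun t ht =>
    (bB_comm (f t) (deriv f t)).trans (hWff t ht)
  have hfp' : ∀ t ∈ I, bB (deriv f t) p = 0 := by
    intro t ht
    have h0 := derivVal_zero_of_constOn h.isOpen ht h.hfp ((hfD t ht).bB' (hasDerivAt_const t p))
    simpa [bB_zero_right] using h0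
  have hfq' : ∀ t ∈ I, bB (deriv f t) q = 0 := by
    intro t ht
    have h0 := derivVal_zero_of_constOn h.isOpen ht h.hfq ((hfD t ht).bB' (hasDerivAt_const t q))
    simpa [bB_zero_right] using h0
  have hWft : ∀ t ∈ I, bB (deriv f t) (tf t) = 0 := by
    intro t ht
    have h0 := derivVal_zero_of_constOn h.isOpen ht h.hft ((hfD t ht).bB' (htD t ht))
    rw [h.htang t ht, bB_smul_right, hWffr t ht] at h0
    linarith
  have hWftr : ∀ t ∈ I, bB (tf t) (deriv f t) = 0 := fun t ht =>
    (bB_comm _ _).trans (hWft t ht)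
  -- second-derivative pairings
  have hs1 : ∀ t ∈ I, bB (deriv (deriv f) t) (f t) = -1 := by
    intro t ht
    have h0 := derivVal_zero_of_constOn h.isOpen ht hWff ((hf'D t ht).bB' (hfD t ht))
    rw [h.hunit t ht] at h0
    linarith
  have hs2 : ∀ t ∈ I, bB (deriv (deriv f) t) (tf t) = k t := by
    intro t ht
    have h0 := derivVal_zero_of_constOn h.isOpen ht hWft ((hf'D t ht).bB' (htD t ht))
    rw [h.htang t ht, bB_smul_right, h.hunit t ht] at h0
    linarith
  have hs3 : ∀ t ∈ I, bB (deriv (deriv f) t) (deriv f t) = 0 := by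
    intro t ht
    have h0 := derivVal_zero_of_constOn h.isOpen ht h.hunit ((hf'D t ht).bB' (hf'D t ht))
    have hc := bB_comm (deriv f t) (deriv (deriv f) t)
    linarith
  have hs4 : ∀ t ∈ I, bB (deriv (deriv f) t) p = 0 := by
    intro t ht
    have h0 := derivVal_zero_of_constOn h.isOpen ht hfp' ((hf'D t ht).bB' (hasDerivAt_const t p))
    simpa [bB_zero_right] using h0
  have hs5 : ∀ t ∈ I, bB (deriv (deriv f) t) q = 0 := by
    intro t ht
    have h0 := derivVal_zero_of_constOn h.isOpen ht hfq' ((hf'D t ht).bB' (hasDerivAt_const t q))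
    simpa [bB_zero_right] using h0
  -- the second derivative of f
  have hf2 : ∀ t ∈ I, deriv (deriv f) t =
      (-κ) • f t + (χ * k t) • tf t + (-(k t)) • p + q := by
    intro t ht
    have htf0 : bB (tf t) (f t) = 0 := (bB_comm _ _).trans (h.hft t ht)
    have hpf : bB p (f t) = 0 := (bB_comm _ _).trans (h.hfp t ht)
    have hqf : bB q (f t) = -1 := (bB_comm _ _).trans (h.hfq t ht)
    have hpt : bB p (tf t) = -1 := (bB_comm _ _).trans (h.htp t ht)
    have hqt : bB q (tf t) = 0 := (bB_comm _ _).trans (h.htq t ht)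
    have hpf' : bB p (deriv f t) = 0 := (bB_comm _ _).trans (hfp' t ht)
    have hqf' : bB q (deriv f t) = 0 := (bB_comm _ _).trans (hfq' t ht)
    have hqp : bB q p = 0 := (bB_comm _ _).trans h.hpq
    rw [← sub_eq_zero]
    refine frame_eq_zero p q χ κ (f t) (tf t) (deriv f t) _
      (h.hff t ht) (h.hft t ht) (hWffr t ht) (h.hfp t ht) (h.hfq t ht)
      (h.htt t ht) (hWftr t ht) (h.htp t ht) (h.htq t ht)
      (h.hunit t ht) (hfp' t ht) (hfq' t ht) h.hpp h.hqq h.hpq ?_ ?_ ?_ ?_ ?_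
    · rw [bB_sub_left]
      simp only [bB_add_left, bB_smul_left]
      rw [hs1 t ht, h.hff t ht, htf0, hpf, hqf]
      ring
    · rw [bB_sub_left]
      simp only [bB_add_left, bB_smul_left]
      rw [hs2 t ht, h.hft t ht, h.htt t ht, hpt, hqt]
      ring
    · rw [bB_sub_left]
      simp only [bB_add_left, bB_smul_left]
      rw [hs3 t ht, hWffr t ht, hWftr t ht, hpf', hqf']
      ring
    · rw [bB_sub_left]
      simp only [bB_add_left, bB_smul_left]
      rw [hs4 t ht, h.hfp t ht, h.htp t ht, h.hpp, hqp]
      ring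
    · rw [bB_sub_left]
      simp only [bB_add_left, bB_smul_left]
      rw [hs5 t ht, h.hfq t ht, h.htq t ht, h.hpq, h.hqq]
      ring
  have hk2 : ∀ t ∈ I, deriv (deriv k) t = -(χ / 2 * k t ^ 3 + (mu + κ) * k t + lam) := by
    intro t ht
    have := hODE t ht
    linarith
  have hre : r = fun s => (-(k s * κ + lam)) • f s + (χ / 2 * (k s) ^ 2 + mu) • tf s
      - (deriv k s) • deriv f s + (k s) • q - ((k s) ^ 2 / 2) • p := funext hr
  -- r has vanishing derivative
  have hrD : ∀ t ∈ I, HasDerivAt r 0 t := by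
    intro t ht
    have H := ((((((((hkD t ht).mul_const κ).add_const lam).neg).smul (hfD t ht)).add
      (((((hkD t ht).pow 2).const_mul (χ / 2)).add_const mu).smul (htD t ht))).sub
      ((hk'D t ht).smul (hf'D t ht))).add ((hkD t ht).smul_const q)).sub
      ((((hkD t ht).pow 2).div_const 2).smul_const p)
    rw [hre]
    refine H.congr_deriv ?_
    rw [h.htang t ht, hf2 t ht, hk2 t ht]
    simp only [Pi.neg_apply, Pi.pow_apply]
    module
  have hconv : Convex ℝ I := h.ordConn.convex
  have hconst : ∀ s ∈ I, r s = r t₀ := by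
    intro s hs
    refine hconv.is_const_of_fderivWithin_eq_zero
      (fun x hx => ((hrD x hx).differentiableAt.differentiableWithinAt)) ?_ hs ht₀
    intro x hx
    rw [fderivWithin_of_isOpen h.isOpen hx, (hrD x hx).hasFDerivAt.fderiv]
    ext y
    simp
  -- pointwise form of ξ
  have hξap : ∀ t x, ξ t x = bB (deriv f t) x • f t - bB (f t) x • deriv f t := by
    intro t x
    rw [hξ]
    simp only [ContinuousLinearMap.neg_apply, wedge_apply, neg_sub]
  -- pairings with r
  have hrF : ∀ t ∈ I, bB (f t) (r t) = -(k t) := by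
    intro t ht
    rw [hr t]
    simp only [bB_add_right, bB_sub_right, bB_smul_right, h.hff t ht, h.hft t ht,
      hWffr t ht, h.hfq t ht, h.hfp t ht]
    ring
  have hrF' : ∀ t ∈ I, bB (deriv f t) (r t) = -(deriv k t) := by
    intro t ht
    rw [hr t]
    simp only [bB_add_right, bB_sub_right, bB_smul_right, hWff t ht, hWft t ht,
      h.hunit t ht, hfq' t ht, hfp' t ht]
    ring
  -- quadratic differential
  have hQD : IsQuadDiff I f tf ξ (fun _ => 1) := by
    intro t ht
    refine ⟨1, 0, -(k t), 0, ?_, ?_, by norm_num⟩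
    · rw [hξap, h.hunit t ht, hWffr t ht]
      module
    · rw [h.htang t ht, hξap, bB_smul_right, bB_smul_right, h.hunit t ht, hWffr t ht]
      module
  -- Legendre curve frame
  have hLF : LegendreCurveFrame I f tf := by
    refine ⟨h.isOpen, h.ordConn, h.smoothf, h.smootht, ?_, h.hff, h.hft, h.htt,
      hWff, hWft, ?_, ?_, ?_⟩
    · intro t ht a b hab
      have e1 : bB (a • f t + b • tf t) q = 0 := by rw [hab]; exact bB_zero_left q
      have e2 : bB (a • f t + b • tf t) p = 0 := by rw [hab]; exact bB_zero_left p
      rw [bB_add_left, bB_smul_left, bB_smul_left, h.hfq t ht, h.htq t ht] at e1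
      rw [bB_add_left, bB_smul_left, bB_smul_left, h.hfp t ht, h.htp t ht] at e2
      constructor <;> linarith
    · intro t ht
      rw [h.htang t ht, bB_smul_left, hWff t ht]
      ring
    · intro t ht
      rw [h.htang t ht, bB_smul_left, hWft t ht]
      ring
    · intro t ht
      have hli3 : LinearIndependent ℝ ![f t, tf t, deriv f t] := by
        rw [Fintype.linearIndependent_iff]
        intro g hg
        have hg' : g 0 • f t + g 1 • tf t + g 2 • deriv f t = 0 := by
          simpa [Fin.sum_univ_three] using hg
        have E : ∀ w : V, g 0 * bB (f t) w + g 1 * bB (tf t) w + g 2 * bB (deriv f t) w = 0 := by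
          intro w
          have := congrArg (fun z => bB z w) hg'
          simpa [bB_add_left, bB_smul_left, bB_zero_left] using this
        have e1 := E (deriv f t); rw [hWffr t ht, hWftr t ht, h.hunit t ht] at e1
        have e2 := E q; rw [h.hfq t ht, h.htq t ht, hfq' t ht] at e2
        have e3 := E p; rw [h.hfp t ht, h.htp t ht, hfp' t ht] at e3
        have g2 : g 2 = 0 := by linarith
        have g0 : g 0 = 0 := by linarith
        have g1 : g 1 = 0 := by linarith
        intro i; fin_cases i <;> assumption
      have hr3 : Set.range ![f t, tf t, deriv f t] = {f t, tf t, deriv f t} := by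
        ext x
        simp [Matrix.range_cons, Matrix.range_empty, Set.mem_insert_iff]
        tauto
      have hspan : Submodule.span ℝ ({f t, tf t, deriv f t, deriv tf t} : Set V) =
          Submodule.span ℝ (Set.range ![f t, tf t, deriv f t]) := by
        rw [hr3]
        apply le_antisymm
        · rw [Submodule.span_le]
          intro x hx
          simp only [Set.mem_insert_iff, Set.mem_singleton_iff] at hx
          rcases hx with rfl | rfl | rfl | rfl
          · exact Submodule.subset_span (by simp)
          · exact Submodule.subset_span (by simp)
          · exact Submodule.subset_span (by simp)
          · rw [h.htang t ht]
            exact Submodule.smul_mem _ _ (Submodule.subset_span (by simp))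
        · rw [Submodule.span_le]
          intro x hx
          simp only [Set.mem_insert_iff, Set.mem_singleton_iff] at hx
          rcases hx with rfl | rfl | rfl
          · exact Submodule.subset_span (by simp)
          · exact Submodule.subset_span (by simp)
          · exact Submodule.subset_span (by simp)
      rw [hspan, finrank_span_eq_card hli3]
      simp
  -- polarisation
  have hPol : IsPolarisation I f tf ξ := by
    refine ⟨?_, ?_, ⟨fun _ => 1, hQD, t₀, ht₀, one_ne_zero⟩⟩
    · have hW : ContDiff ℝ (⊤ : ℕ∞) (fun ab : V × V => wedgeCL ab.1 ab.2) :=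
        wedgeCL.isBoundedBilinearMap.contDiff
      have hsm : ContDiffOn ℝ (⊤ : ℕ∞) (fun s => -(wedgeCL (f s) (deriv f s))) I :=
        (hW.comp_contDiffOn (ContDiffOn.prodMk h.smoothf hf'sm)).neg
      exact hsm.congr fun s hs => by rw [hξ]; rfl
    · intro t ht
      refine ⟨-(deriv f t), 0, ?_, ?_, ?_, ?_, ?_⟩
      · rw [bB_neg_left, hWff t ht]; ring
      · rw [bB_neg_left, hWft t ht]; ring
      · exact bB_zero_left _
      · exact bB_zero_left _
      · refine ContinuousLinearMap.ext fun x => ?_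
        rw [hξ]
        simp only [ContinuousLinearMap.neg_apply, ContinuousLinearMap.add_apply, wedge_apply,
          bB_neg_left, bB_zero_left, smul_zero, zero_smul, sub_zero, add_zero]
        module
  -- conserved quantities
  have hL1 : IsLCQ I f tf ξ p (fun _ => 0) := by
    refine ⟨contDiffOn_const, fun t ht => ⟨0, 0, by module⟩, fun t ht => ?_⟩
    rw [deriv_const', hξap, h.hfp t ht, hfp' t ht]
    module
  have hL2 : IsLCQ I f tf ξ q (fun s => -(f s)) := by
    refine ⟨h.smoothf.neg, fun t ht => ⟨-1, 0, by module⟩, fun t ht => ?_⟩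
    rw [(hfD t ht).fun_neg.deriv, hξap, h.hfq t ht, hfq' t ht]
    module
  have hL3 : IsLCQ I f tf ξ (r t₀) (fun s => (2 : ℝ) • tf s + k s • f s) := by
    refine ⟨(contDiffOn_const.fun_smul h.smootht).add (h.smoothk.fun_smul h.smoothf),
      fun t ht => ⟨k t, 2, by module⟩, fun t ht => ?_⟩
    have Hp := ((htD t ht).fun_const_smul (2 : ℝ)).fun_add ((hkD t ht).fun_smul (hfD t ht))
    rw [Hp.deriv, hξap, ← hconst t ht, hrF t ht, hrF' t ht, h.htang t ht]
    module
  refine ⟨hLF, hQD, hPol, r t₀, hconst, hL1, hL2, hL3, ?_⟩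
  rintro ⟨s, hs, s', hs', hks⟩
  rw [Fintype.linearIndependent_iff]
  intro g hg
  have hg' : g 0 • p + g 1 • q + g 2 • r t₀ = 0 := by
    simpa [Fin.sum_univ_three] using hg
  have E : ∀ u ∈ I, g 1 + g 2 * k u = 0 := by
    intro u hu
    have hB := congrArg (fun z => bB (f u) z) hg'
    simp only [bB_add_right, bB_smul_right, bB_zero_right] at hB
    rw [h.hfp u hu, h.hfq u hu, ← hconst u hu, hrF u hu] at hB
    linear_combination -hB
  have g2 : g 2 = 0 := by
    have e1 := E s hs
    have e2 := E s' hs'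
    have hmul : g 2 * (k s - k s') = 0 := by linear_combination e1 - e2
    rcases mul_eq_zero.mp hmul with h' | h'
    · exact h'
    · exact absurd (sub_eq_zero.mp h') hks
  have g1 : g 1 = 0 := by
    have := E s hs
    rw [g2] at this
    linarith
  have g0 : g 0 = 0 := by
    rw [g1, g2] at hg'
    have hg'' : g 0 • p = (0 : V) := by simpa using hg'
    have hB := congrArg (fun z => bB (tf s) z) hg''
    simp only [bB_smul_right, bB_zero_right] at hB
    rw [h.htp s hs] at hB
    linarith
  intro i
  fin_cases i <;> assumption
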